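/- arXiv:2202.03145 — 5 statements merged into one kernel-verified Lean document; each statement's English description precedes it below -/
import Mathlib

section
/- Let I ⊆ ℝ be an interval containing 0 and let m ∈ (0,1]. Let x₁, …, xₙ ∈ I and let w₁, …, wₙ ∈ [0,1] with ∑_{k=1}^n w_k = 1. If φ : I → ℝ is m-convex, then φ(m ∑_{k=1}^n w_k x_k) ≤ m ∑_{k=1}^n w_k φ(x_k). -/
/-!
Induction on the number of points. Split off one point `xₐ` and let `S` be the total weight of
the others, whose normalized barycenter `z` lies in `I`. Then
`m ∑ wₖ xₖ = S (m z) + m (1 - S) xₐ`, where `m z ∈ I` because `I` is convex and contains `0`.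
One application of `m`-convexity followed by the induction hypothesis for `z` gives the claim.
-/

open Finset Set

def MConvexOn (m : ℝ) (I : Set ℝ) (φ : ℝ → ℝ) : Prop :=
  ∀ x ∈ I, ∀ y ∈ I, ∀ t ∈ Icc (0 : ℝ) 1,
    φ (t * x + m * (1 - t) * y) ≤ t * φ x + m * (1 - t) * φ y

namespace MConvexOn

variable {m : ℝ} {I : Set ℝ} {φ : ℝ → ℝ}

theorem map_mul_le (hφ : MConvexOn m I φ) {y : ℝ} (hy : y ∈ I) : φ (m * y) ≤ m * φ y := by
  simpa using hφ y hy y hy 0 ⟨le_rfl, zero_le_one⟩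

theorem map_mul_add_le (hφ : MConvexOn m I φ) (hI : Convex ℝ I) (h0 : (0 : ℝ) ∈ I)
    (hm : m ∈ Icc (0 : ℝ) 1) {t z y c : ℝ} (ht : t ∈ Icc (0 : ℝ) 1) (hz : z ∈ I) (hy : y ∈ I)
    (hc : φ (m * z) ≤ m * c) :
    φ (m * (t * z + (1 - t) * y)) ≤ m * (t * c + (1 - t) * φ y) := by
  have hmz : m * z ∈ I := by simpa only [smul_eq_mul] using hI.smul_mem_of_zero_mem h0 hz hm
  calc φ (m * (t * z + (1 - t) * y))
      = φ (t * (m * z) + m * (1 - t) * y) := by ring_nf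
    _ ≤ t * φ (m * z) + m * (1 - t) * φ y := hφ _ hmz _ hy t ht
    _ ≤ t * (m * c) + m * (1 - t) * φ y := by gcongr; exact ht.1
    _ = m * (t * c + (1 - t) * φ y) := by ring

theorem map_sum_le (hφ : MConvexOn m I φ) (hI : Convex ℝ I) (h0 : (0 : ℝ) ∈ I)
    (hm : m ∈ Icc (0 : ℝ) 1) {ι : Type*} (s : Finset ι) {w x : ι → ℝ}
    (hw : ∀ i ∈ s, 0 ≤ w i) (hw1 : ∑ i ∈ s, w i = 1) (hx : ∀ i ∈ s, x i ∈ I) :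
    φ (m * ∑ i ∈ s, w i * x i) ≤ m * ∑ i ∈ s, w i * φ (x i) := by
  classical
  induction s using Finset.induction_on generalizing w with
  | empty => simp at hw1
  | insert a s ha ih =>
    rw [sum_insert ha] at hw1
    rw [sum_insert ha, sum_insert ha]
    set S := ∑ i ∈ s, w i
    have hw' : ∀ i ∈ s, 0 ≤ w i := fun i hi ↦ hw i (mem_insert_of_mem hi)
    have hx' : ∀ i ∈ s, x i ∈ I := fun i hi ↦ hx i (mem_insert_of_mem hi)
    have hxa : x a ∈ I := hx a (mem_insert_self a s)
    have hS0 : 0 ≤ S := sum_nonneg hw'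
    have hwa : w a = 1 - S := by linarith
    rcases hS0.eq_or_lt with hSzero | hSpos
    · have hzero : ∀ i ∈ s, w i = 0 := (sum_eq_zero_iff_of_nonneg hw').1 hSzero.symm
      have hrest : ∀ f : ι → ℝ, ∑ i ∈ s, w i * f i = 0 := fun f ↦
        sum_eq_zero fun i hi ↦ by rw [hzero i hi, zero_mul]
      simpa only [hrest, hwa, ← hSzero, sub_zero, one_mul, add_zero] using hφ.map_mul_le hxa
    · set v : ι → ℝ := fun i ↦ w i / S
      have hv : ∀ i ∈ s, 0 ≤ v i := fun i hi ↦ div_nonneg (hw' i hi) hS0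
      have hv1 : ∑ i ∈ s, v i = 1 := by rw [← sum_div, div_self hSpos.ne']
      have hrescale : ∀ f : ι → ℝ, ∑ i ∈ s, w i * f i = S * ∑ i ∈ s, v i * f i := fun f ↦ by
        rw [mul_sum]
        exact sum_congr rfl fun i _ ↦ by simp only [v]; field_simp
      have hz : ∑ i ∈ s, v i * x i ∈ I := by
        simpa only [smul_eq_mul] using hI.sum_mem hv hv1 hx'
      have hS1 : S ≤ 1 := by linarith [hw a (mem_insert_self a s)]
      rw [hrescale, hrescale, hwa, add_comm, add_comm ((1 - S) * _)]
      exact hφ.map_mul_add_le hI h0 hm ⟨hS0, hS1⟩ hz hxa (ih hv hv1 hx')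

end MConvexOn

/-- Discrete Jensen-type inequality for m-convex functions (Theorem 3.2 of PAA):
if `I` is an interval containing `0`, `m ∈ (0,1]`, `∑ wₖ xₖ` is a convex combination of
points of `I`, and `φ` is `m`-convex on `I`, then `φ(m ∑ wₖ xₖ) ≤ m ∑ wₖ φ(xₖ)`. -/
theorem jensen_mconvex_discrete
    (I : Set ℝ) (hI : I.OrdConnected) (h0 : (0 : ℝ) ∈ I)
    (m : ℝ) (hm : m ∈ Set.Ioc (0 : ℝ) 1)
    (n : ℕ) (x : Fin n → ℝ) (hx : ∀ k, x k ∈ I)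
    (w : Fin n → ℝ) (hw : ∀ k, w k ∈ Set.Icc (0 : ℝ) 1) (hw1 : ∑ k, w k = 1)
    (φ : ℝ → ℝ)
    (hφ : ∀ x ∈ I, ∀ y ∈ I, ∀ t ∈ Set.Icc (0 : ℝ) 1,
      φ (t * x + m * (1 - t) * y) ≤ t * φ x + m * (1 - t) * φ y) :
    φ (m * ∑ k, w k * x k) ≤ m * ∑ k, w k * φ (x k) :=
  MConvexOn.map_sum_le hφ hI.convex h0 (Ioc_subset_Icc_self hm) univ
    (fun k _ ↦ (hw k).1) hw1 (fun k _ ↦ hx k)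
end

section
/- Let x₁ ≤ x₂ ≤ … ≤ xₙ be real numbers and let w₁, …, wₙ be positive weights with ∑_{k=1}^n w_k = 1. If φ is a convex function on [x₁, xₙ], then φ(x₁ + xₙ − ∑_{k=1}^n w_k x_k) ≤ φ(x₁) + φ(xₙ) − ∑_{k=1}^n w_k φ(x_k). -/
/-!
Reflecting `y = μ a + ν b` through the midpoint of `[a, b]` gives `a + b - y = ν a + μ b`, and adding
the convexity inequalities at these two points yields `φ (a + b - y) + φ y ≤ φ a + φ b`.
Since `a + b - ∑ wₖ xₖ = ∑ wₖ (a + b - xₖ)`, Jensen's inequality reduces the theorem to this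
two-point estimate applied to each `xₖ`.
-/

open Finset

section

variable {𝕜 E β : Type*} [CommRing 𝕜] [AddCommGroup E] [Module 𝕜 E] {a b y : E}

theorem add_sub_smul_add_smul_of_add_eq_one {μ ν : 𝕜} (h : μ + ν = 1) :
    a + b - (μ • a + ν • b) = ν • a + μ • b := by
  obtain rfl : ν = 1 - μ := eq_sub_of_add_eq' h
  module

variable [PartialOrder 𝕜]

theorem add_sub_mem_segment (hy : y ∈ segment 𝕜 a b) : a + b - y ∈ segment 𝕜 a b := by
  obtain ⟨μ, ν, hμ, hν, hμν, rfl⟩ := hy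
  exact ⟨ν, μ, hν, hμ, by rwa [add_comm], (add_sub_smul_add_smul_of_add_eq_one hμν).symm⟩

theorem ConvexOn.map_add_sub_le [AddCommGroup β] [PartialOrder β] [IsOrderedAddMonoid β]
    [Module 𝕜 β] {s : Set E} {φ : E → β} (hφ : ConvexOn 𝕜 s φ) (ha : a ∈ s) (hb : b ∈ s)
    (hy : y ∈ segment 𝕜 a b) : φ (a + b - y) ≤ φ a + φ b - φ y := by
  obtain ⟨μ, ν, hμ, hν, hμν, rfl⟩ := hy
  rw [add_sub_smul_add_smul_of_add_eq_one hμν, le_sub_iff_add_le]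
  calc φ (ν • a + μ • b) + φ (μ • a + ν • b)
      ≤ (ν • φ a + μ • φ b) + (μ • φ a + ν • φ b) :=
        add_le_add (hφ.2 ha hb hν hμ (by rwa [add_comm])) (hφ.2 ha hb hμ hν hμν)
    _ = φ a + φ b := by
        obtain rfl : ν = 1 - μ := eq_sub_of_add_eq' hμν
        module

end

theorem ConvexOn.map_add_sub_sum_le {𝕜 E β ι : Type*} [Field 𝕜] [LinearOrder 𝕜]
    [IsStrictOrderedRing 𝕜] [AddCommGroup E] [Module 𝕜 E] [AddCommGroup β] [PartialOrder β]
    [IsOrderedAddMonoid β] [Module 𝕜 β] [IsStrictOrderedModule 𝕜 β] {s : Set E} {φ : E → β}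
    {a b : E} {t : Finset ι} {w : ι → 𝕜} {p : ι → E}
    (hφ : ConvexOn 𝕜 s φ) (ha : a ∈ s) (hb : b ∈ s) (h₀ : ∀ i ∈ t, 0 ≤ w i)
    (h₁ : ∑ i ∈ t, w i = 1) (hp : ∀ i ∈ t, p i ∈ segment 𝕜 a b) :
    φ (a + b - ∑ i ∈ t, w i • p i) ≤ φ a + φ b - ∑ i ∈ t, w i • φ (p i) := by
  have hreflect : a + b - ∑ i ∈ t, w i • p i = ∑ i ∈ t, w i • (a + b - p i) := by
    simp only [smul_sub, sum_sub_distrib, ← sum_smul, h₁, one_smul]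
  calc φ (a + b - ∑ i ∈ t, w i • p i)
      ≤ ∑ i ∈ t, w i • φ (a + b - p i) := hreflect ▸ hφ.map_sum_le h₀ h₁ fun i hi =>
        hφ.1.segment_subset ha hb (add_sub_mem_segment (hp i hi))
    _ ≤ ∑ i ∈ t, w i • (φ a + φ b - φ (p i)) := sum_le_sum fun i hi =>
        smul_le_smul_of_nonneg_left (hφ.map_add_sub_le ha hb (hp i hi)) (h₀ i hi)
    _ = φ a + φ b - ∑ i ∈ t, w i • φ (p i) := by
        simp only [smul_sub, sum_sub_distrib, ← sum_smul, h₁, one_smul]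

/-- Jensen–Mercer inequality (Theorem 1.2 of Mercer): if `x₀ ≤ x₁ ≤ ⋯ ≤ xₙ`,
the weights `wₖ` are positive and sum to `1`, and `φ` is convex on `[x₀, xₙ]`, then
`φ(x₀ + xₙ − ∑ wₖ xₖ) ≤ φ(x₀) + φ(xₙ) − ∑ wₖ φ(xₖ)`. -/
theorem jensen_mercer_discrete
    (n : ℕ) (x : Fin (n + 1) → ℝ) (hx : Monotone x)
    (w : Fin (n + 1) → ℝ) (hw : ∀ k, 0 < w k) (hw1 : ∑ k, w k = 1)
    (φ : ℝ → ℝ) (hφ : ConvexOn ℝ (Set.Icc (x 0) (x (Fin.last n))) φ) :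
    φ (x 0 + x (Fin.last n) - ∑ k, w k * x k)
      ≤ φ (x 0) + φ (x (Fin.last n)) - ∑ k, w k * φ (x k) := by
  have hab : x 0 ≤ x (Fin.last n) := hx (Fin.zero_le _)
  have hmem : ∀ k, x k ∈ segment ℝ (x 0) (x (Fin.last n)) := fun k => by
    rw [segment_eq_Icc hab]
    exact ⟨hx (Fin.zero_le k), hx (Fin.le_last k)⟩
  simpa only [smul_eq_mul] using hφ.map_add_sub_sum_le (Set.left_mem_Icc.2 hab)
    (Set.right_mem_Icc.2 hab) (fun k _ => (hw k).le) hw1 fun k _ => hmem k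
end

section
/- Let a ≤ 0 ≤ b be real numbers, let y₁, …, yₙ ∈ [a,b], and let w₁, …, wₙ be positive weights with ∑_{k=1}^n w_k = 1. If φ is a continuous m-convex function on [a,b] with m ∈ (0,1], then φ(m a + m² b − m² ∑_{k=1}^n w_k y_k) ≤ m φ(a) + m² φ(b) − m ∑_{k=1}^n w_k φ(m y_k). -/
/-!
The composite point `m ∑ wₖ Qₖ`, with `Qₖ = a + m b − m yₖ`, is exactly the left-hand argument, so
the `m`-convex Jensen inequality bounds the left-hand side by `m ∑ wₖ φ(Qₖ)`. Each `Qₖ` is paired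
with `m yₖ`: writing `m yₖ = s a + m (1 − s) b`, the point `Qₖ` is the reflected combination
`(1 − s) a + m s b`, and adding the two `m`-convexity inequalities gives
`φ(Qₖ) + φ(m yₖ) ≤ φ(a) + m φ(b)`.
-/

open Finset Set

def IsMConvexOn (m : ℝ) (s : Set ℝ) (φ : ℝ → ℝ) : Prop :=
  ∀ x ∈ s, ∀ y ∈ s, ∀ t ∈ Icc (0 : ℝ) 1, φ (t * x + m * (1 - t) * y) ≤ t * φ x + m * (1 - t) * φ y

namespace IsMConvexOn

variable {m : ℝ} {s : Set ℝ} {φ : ℝ → ℝ}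

theorem map_mul_le (hφ : IsMConvexOn m s φ) {x : ℝ} (hx : x ∈ s) : φ (m * x) ≤ m * φ x := by
  simpa using hφ x hx x hx 0 ⟨le_rfl, zero_le_one⟩

theorem map_mul_sum_le (hφ : IsMConvexOn m s φ) (hs : Convex ℝ s) (hms : ∀ x ∈ s, m * x ∈ s)
    {ι : Type*} {t : Finset ι} (ht : t.Nonempty) {w Q : ι → ℝ} (hw : ∀ i ∈ t, 0 < w i)
    (hw1 : ∑ i ∈ t, w i = 1) (hQ : ∀ i ∈ t, Q i ∈ s) :
    φ (m * ∑ i ∈ t, w i * Q i) ≤ m * ∑ i ∈ t, w i * φ (Q i) := by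
  induction ht using Finset.Nonempty.cons_induction generalizing w with
  | singleton j =>
    rw [sum_singleton] at hw1
    simpa [hw1] using hφ.map_mul_le (hQ j (mem_singleton_self j))
  | cons j t _ ht ih =>
    simp only [sum_cons, forall_mem_cons] at hw1 hw hQ ⊢
    set W := ∑ i ∈ t, w i
    have hW : 0 < W := sum_pos hw.2 ht
    have hrescale : ∀ g : ι → ℝ, W * ∑ i ∈ t, w i / W * g i = ∑ i ∈ t, w i * g i := fun g => by
      rw [mul_sum]
      exact sum_congr rfl fun i _ => by field_simp
    have hv1 : ∑ i ∈ t, w i / W = 1 := by rw [← sum_div, div_self hW.ne']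
    have hS : ∑ i ∈ t, w i / W * Q i ∈ s :=
      hs.sum_mem (fun i hi => (div_pos (hw.2 i hi) hW).le) hv1 hQ.2
    have hwj : 1 - W = w j := by linarith
    calc φ (m * (w j * Q j + ∑ i ∈ t, w i * Q i))
        = φ (W * (m * ∑ i ∈ t, w i / W * Q i) + m * (1 - W) * Q j) := by
          rw [hwj, ← hrescale Q]; congr 1; ring
      _ ≤ W * φ (m * ∑ i ∈ t, w i / W * Q i) + m * (1 - W) * φ (Q j) :=
          hφ _ (hms _ hS) _ hQ.1 W ⟨hW.le, by linarith [hw.1]⟩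
      _ ≤ W * (m * ∑ i ∈ t, w i / W * φ (Q i)) + m * (1 - W) * φ (Q j) := by
          gcongr; exact ih (fun i hi => div_pos (hw.2 i hi) hW) hv1 hQ.2
      _ = m * (w j * φ (Q j) + ∑ i ∈ t, w i * φ (Q i)) := by
          rw [hwj, mul_left_comm, hrescale]; ring

theorem map_sub_add_map_le (hφ : IsMConvexOn m s φ) {a b z : ℝ} (ha : a ∈ s) (hb : b ∈ s)
    (hz : z ∈ segment ℝ a (m * b)) : φ (a + m * b - z) + φ z ≤ φ a + m * φ b := by
  obtain ⟨p, q, hp, hq, hpq, rfl⟩ := hz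
  obtain rfl : q = 1 - p := by linarith
  simp only [smul_eq_mul]
  have h₁ := hφ a ha b hb p ⟨hp, by linarith⟩
  have h₂ := hφ a ha b hb (1 - p) ⟨hq, by linarith⟩
  rw [show a + m * b - (p * a + (1 - p) * (m * b)) = (1 - p) * a + m * (1 - (1 - p)) * b by ring,
    show p * a + (1 - p) * (m * b) = p * a + m * (1 - p) * b by ring]
  linarith

end IsMConvexOn

theorem mul_mem_Icc_of_mem_Icc {a b m x : ℝ} (ha : a ≤ 0) (hb : 0 ≤ b) (hm : m ∈ Icc (0 : ℝ) 1)
    (hx : x ∈ Icc a b) : m * x ∈ Icc a b := by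
  obtain ⟨hm0, hm1⟩ := hm
  obtain ⟨hax, hxb⟩ := hx
  constructor <;> nlinarith

theorem sum_mul_sub_of_sum_eq_one {ι : Type*} {t : Finset ι} {w g : ι → ℝ}
    (hw1 : ∑ i ∈ t, w i = 1) (c : ℝ) : ∑ i ∈ t, w i * (c - g i) = c - ∑ i ∈ t, w i * g i := by
  simp only [mul_sub, sum_sub_distrib, ← sum_mul, hw1, one_mul]

theorem jensen_mercer_mconvex_endpoints_general
    (a b : ℝ) (ha : a ≤ 0) (hb : 0 ≤ b)
    (n : ℕ) (y : Fin n → ℝ) (hy : ∀ k, y k ∈ Set.Icc a b)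
    (w : Fin n → ℝ) (hw : ∀ k, 0 < w k) (hw1 : ∑ k, w k = 1)
    (m : ℝ) (hm : m ∈ Set.Ioc (0 : ℝ) 1)
    (φ : ℝ → ℝ)
    (hφ : ∀ x ∈ Set.Icc a b, ∀ y ∈ Set.Icc a b, ∀ t ∈ Set.Icc (0 : ℝ) 1,
      φ (t * x + m * (1 - t) * y) ≤ t * φ x + m * (1 - t) * φ y) :
    φ (m * a + m ^ 2 * b - m ^ 2 * ∑ k, w k * y k)
      ≤ m * φ a + m ^ 2 * φ b - m * ∑ k, w k * φ (m * y k) := by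
  have hφ' : IsMConvexOn m (Icc a b) φ := hφ
  have hm' : m ∈ Icc (0 : ℝ) 1 := Ioc_subset_Icc_self hm
  have hab : a ≤ b := ha.trans hb
  have hmy : ∀ k, m * y k ∈ Icc a (m * b) := fun k =>
    ⟨(mul_mem_Icc_of_mem_Icc ha hb hm' (hy k)).1, by nlinarith [(hy k).2, hm.1]⟩
  have hQ : ∀ k, a + m * b - m * y k ∈ Icc a b := fun k =>
    ⟨by linarith [(hmy k).2], by nlinarith [(hmy k).1, hm.2]⟩
  have hJensen := hφ'.map_mul_sum_le (convex_Icc a b)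
    (fun _ => mul_mem_Icc_of_mem_Icc ha hb hm')
    (nonempty_of_sum_ne_zero (f := w) (by rw [hw1]; exact one_ne_zero)) (fun k _ => hw k) hw1
    (fun k _ => hQ k)
  have hMercer : ∀ k, φ (a + m * b - m * y k) ≤ φ a + m * φ b - φ (m * y k) := fun k => by
    linarith [hφ'.map_sub_add_map_le ⟨le_rfl, hab⟩ ⟨hab, le_rfl⟩ (Icc_subset_segment (hmy k))]
  have hcenter :
      m * ∑ k, w k * (a + m * b - m * y k) = m * a + m ^ 2 * b - m ^ 2 * ∑ k, w k * y k := by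
    rw [sum_mul_sub_of_sum_eq_one hw1]
    simp only [mul_left_comm _ m, ← mul_sum]
    ring
  calc φ (m * a + m ^ 2 * b - m ^ 2 * ∑ k, w k * y k)
      = φ (m * ∑ k, w k * (a + m * b - m * y k)) := by rw [hcenter]
    _ ≤ m * ∑ k, w k * φ (a + m * b - m * y k) := hJensen
    _ ≤ m * ∑ k, w k * (φ a + m * φ b - φ (m * y k)) :=
        mul_le_mul_of_nonneg_left
          (sum_le_sum fun k _ => mul_le_mul_of_nonneg_left (hMercer k) (hw k).le) hm.1.le
    _ = m * φ a + m ^ 2 * φ b - m * ∑ k, w k * φ (m * y k) := by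
        rw [sum_mul_sub_of_sum_eq_one hw1]; ring

/-- Jensen–Mercer-type inequality for continuous m-convex functions at the endpoints:
if `a ≤ 0 ≤ b`, `y₁, …, yₙ ∈ [a,b]`, the weights `wₖ` are positive and sum to `1`, and
`φ` is a continuous `m`-convex function on `[a,b]` with `m ∈ (0,1]`, then
`φ(m a + m² b − m² ∑ wₖ yₖ) ≤ m φ(a) + m² φ(b) − m ∑ wₖ φ(m yₖ)`. -/
theorem jensen_mercer_mconvex_endpoints
    (a b : ℝ) (ha : a ≤ 0) (hb : 0 ≤ b)
    (n : ℕ) (y : Fin n → ℝ) (hy : ∀ k, y k ∈ Set.Icc a b)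
    (w : Fin n → ℝ) (hw : ∀ k, 0 < w k) (hw1 : ∑ k, w k = 1)
    (m : ℝ) (hm : m ∈ Set.Ioc (0 : ℝ) 1)
    (φ : ℝ → ℝ) (hφc : ContinuousOn φ (Set.Icc a b))
    (hφ : ∀ x ∈ Set.Icc a b, ∀ y ∈ Set.Icc a b, ∀ t ∈ Set.Icc (0 : ℝ) 1,
      φ (t * x + m * (1 - t) * y) ≤ t * φ x + m * (1 - t) * φ y) :
    φ (m * a + m ^ 2 * b - m ^ 2 * ∑ k, w k * y k)
      ≤ m * φ a + m ^ 2 * φ b - m * ∑ k, w k * φ (m * y k) :=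
  jensen_mercer_mconvex_endpoints_general a b ha hb n y hy w hw hw1 m hm φ hφ
end

section
/- Let μ be a probability measure on a measurable space X and let a ≤ b be real constants. If f : X → [a,b] is a measurable function and φ is a convex function on [a,b] (not assumed continuous at the endpoints), then f and φ ∘ f are μ-integrable and φ(a + b − ∫_X f dμ) ≤ φ(a) + φ(b) − ∫_X (φ ∘ f) dμ. -/
/-!
Let `chord` be the affine function agreeing with `φ` at `a` and `b`. Convexity gives `φ ≤ chord`
on `[a, b]`, and the reflection `t ↦ a + b - t` turns `chord` into `φ a + φ b - chord`. With
`m = ∫ f dμ`, integrating `φ ∘ f ≤ chord ∘ f` against the probability measure `μ` gives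
`∫ φ ∘ f dμ ≤ chord m`, hence
`φ (a + b - m) ≤ chord (a + b - m) = φ a + φ b - chord m ≤ φ a + φ b - ∫ φ ∘ f dμ`.
Integrability of `φ ∘ f` needs care because `φ` may jump at `a` and `b`: it is bounded on `[a, b]`
and continuous off the two endpoints, hence measurable.
-/

open MeasureTheory Set

theorem add_sub_mem_Icc {a b t : ℝ} (ht : t ∈ Icc a b) : a + b - t ∈ Icc a b :=
  ⟨by linarith [ht.2], by linarith [ht.1]⟩

namespace ConvexOn

variable {a b t : ℝ} {φ : ℝ → ℝ}

/-- The lower bound holds because `(a + b) / 2` is the midpoint of `t` and `a + b - t`. -/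
theorem apply_mem_Icc (hφ : ConvexOn ℝ (Icc a b) φ) (ht : t ∈ Icc a b) :
    φ t ∈ Icc (2 * φ ((a + b) / 2) - max (φ a) (φ b)) (max (φ a) (φ b)) := by
  have ha : a ∈ Icc a b := left_mem_Icc.2 (ht.1.trans ht.2)
  have hb : b ∈ Icc a b := right_mem_Icc.2 (ht.1.trans ht.2)
  have hmid : φ ((1 / 2 : ℝ) • t + (1 / 2 : ℝ) • (a + b - t)) ≤
      (1 / 2 : ℝ) • φ t + (1 / 2 : ℝ) • φ (a + b - t) :=
    hφ.2 ht (add_sub_mem_Icc ht) (by norm_num) (by norm_num) (by norm_num)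
  have hmid_eq : (1 / 2 : ℝ) • t + (1 / 2 : ℝ) • (a + b - t) = (a + b) / 2 := by
    simp only [smul_eq_mul]; ring
  rw [hmid_eq, smul_eq_mul, smul_eq_mul] at hmid
  have hrefl_le := hφ.le_max_of_mem_Icc ha hb (add_sub_mem_Icc ht)
  exact ⟨by linarith, hφ.le_max_of_mem_Icc ha hb ht⟩

theorem measurable_domRestrict_Icc (hφ : ConvexOn ℝ (Icc a b) φ) :
    Measurable ((Icc a b).domRestrict φ) := by
  have hcont : ContinuousOn φ (Ioo a b) := by
    simpa only [interior_Icc] using hφ.continuousOn_interior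
  refine ContinuousOn.measurable_of_countable_compl (s := Subtype.val ⁻¹' Ioo a b)
    (hcont.comp continuous_subtype_val.continuousOn fun _ h => h) ?_
  refine ((countable_singleton a).insert b).preimage Subtype.val_injective |>.mono ?_
  rintro ⟨t, ht⟩ hnot
  simp only [mem_compl_iff, mem_preimage, mem_Ioo, not_and_or, not_lt] at hnot
  rcases hnot with h | h
  · exact Or.inr (le_antisymm h ht.1)
  · exact Or.inl (le_antisymm ht.2 h)

variable {X : Type*} [MeasurableSpace X] {f : X → ℝ}

theorem measurable_comp (hφ : ConvexOn ℝ (Icc a b) φ) (hfm : Measurable f)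
    (hf : ∀ x, f x ∈ Icc a b) : Measurable (φ ∘ f) :=
  hφ.measurable_domRestrict_Icc.comp (hfm.subtype_mk (h := hf))

theorem integrable_comp {μ : Measure X} [IsFiniteMeasure μ] (hφ : ConvexOn ℝ (Icc a b) φ)
    (hfm : Measurable f) (hf : ∀ x, f x ∈ Icc a b) : Integrable (φ ∘ f) μ :=
  .of_mem_Icc _ _ (hφ.measurable_comp hfm hf).aemeasurable
    (.of_forall fun x => hφ.apply_mem_Icc (hf x))

end ConvexOn

noncomputable def chord (φ : ℝ → ℝ) (a b t : ℝ) : ℝ := φ a + slope φ a b * (t - a)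

/-- No case split on `a = b` is needed: `(b - a) • slope φ a b = φ b - φ a` holds for all `a, b`. -/
theorem chord_add_chord_add_sub (φ : ℝ → ℝ) (a b t : ℝ) :
    chord φ a b t + chord φ a b (a + b - t) = φ a + φ b := by
  have hslope := sub_smul_slope φ a b
  simp only [smul_eq_mul, vsub_eq_sub] at hslope
  simp only [chord]
  linear_combination hslope

theorem ConvexOn.le_chord {a b t : ℝ} {φ : ℝ → ℝ} (hφ : ConvexOn ℝ (Icc a b) φ)
    (ht : t ∈ Icc a b) : φ t ≤ chord φ a b t := by
  rcases eq_or_lt_of_le ht.1 with rfl | hat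
  · simp [chord]
  have ha : a ∈ Icc a b := left_mem_Icc.2 (ht.1.trans ht.2)
  have hb : b ∈ Icc a b := right_mem_Icc.2 (ht.1.trans ht.2)
  have hsecant := hφ.secant_mono ha ht hb hat.ne' (hat.trans_le ht.2).ne' ht.2
  have := (div_le_iff₀ (sub_pos.2 hat)).1 hsecant
  rw [chord, slope_def_field]
  linarith

section Integral

variable {X : Type*} [MeasurableSpace X] {μ : Measure X} {f : X → ℝ}

theorem integrable_chord_comp [IsFiniteMeasure μ] (φ : ℝ → ℝ) (a b : ℝ) (hf : Integrable f μ) :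
    Integrable (fun x => chord φ a b (f x)) μ :=
  (integrable_const _).add ((hf.sub (integrable_const a)).const_mul _)

theorem integral_chord_comp [IsProbabilityMeasure μ] (φ : ℝ → ℝ) (a b : ℝ)
    (hf : Integrable f μ) : ∫ x, chord φ a b (f x) ∂μ = chord φ a b (∫ x, f x ∂μ) := by
  simp only [chord]
  have hlin : Integrable (fun x => slope φ a b * (f x - a)) μ :=
    (hf.sub (integrable_const a)).const_mul _
  rw [integral_add (integrable_const _) hlin, integral_const_mul, integral_sub hf (integrable_const a)]
  simp

theorem ConvexOn.integral_comp_le_chord [IsProbabilityMeasure μ] {a b : ℝ} {φ : ℝ → ℝ}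
    (hφ : ConvexOn ℝ (Icc a b) φ) (hfm : Measurable f) (hf : ∀ x, f x ∈ Icc a b) :
    ∫ x, φ (f x) ∂μ ≤ chord φ a b (∫ x, f x ∂μ) := by
  have hfi : Integrable f μ := .of_mem_Icc a b hfm.aemeasurable (.of_forall hf)
  rw [← integral_chord_comp φ a b hfi]
  exact integral_mono (hφ.integrable_comp hfm hf) (integrable_chord_comp φ a b hfi)
    fun x => hφ.le_chord (hf x)

end Integral

theorem jensen_mercer_integral_general
    {X : Type*} [MeasurableSpace X] (μ : Measure X) [IsProbabilityMeasure μ]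
    (a b : ℝ)
    (f : X → ℝ) (hfm : Measurable f) (hf : ∀ x, f x ∈ Set.Icc a b)
    (φ : ℝ → ℝ) (hφ : ConvexOn ℝ (Set.Icc a b) φ) :
    Integrable f μ ∧ Integrable (φ ∘ f) μ ∧
      φ (a + b - ∫ x, f x ∂μ) ≤ φ a + φ b - ∫ x, φ (f x) ∂μ := by
  have hfi : Integrable f μ := .of_mem_Icc a b hfm.aemeasurable (.of_forall hf)
  refine ⟨hfi, hφ.integrable_comp hfm hf, ?_⟩
  have hmean : ∫ x, f x ∂μ ∈ Icc a b :=
    (convex_Icc a b).integral_mem isClosed_Icc (.of_forall hf) hfi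
  calc φ (a + b - ∫ x, f x ∂μ)
      ≤ chord φ a b (a + b - ∫ x, f x ∂μ) := hφ.le_chord (add_sub_mem_Icc hmean)
    _ = φ a + φ b - chord φ a b (∫ x, f x ∂μ) := by
      linarith [chord_add_chord_add_sub φ a b (∫ x, f x ∂μ)]
    _ ≤ φ a + φ b - ∫ x, φ (f x) ∂μ := by
      linarith [hφ.integral_comp_le_chord (μ := μ) hfm hf]

/-- Continuous Jensen–Mercer inequality for convex functions (not assumed continuous at
the endpoints): if `μ` is a probability measure on `X`, `a ≤ b`, `f : X → [a,b]` is
measurable, and `φ` is convex on `[a,b]`, then `f` and `φ ∘ f` are `μ`-integrable and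
`φ(a + b − ∫ f dμ) ≤ φ(a) + φ(b) − ∫ φ ∘ f dμ`. -/
theorem jensen_mercer_integral
    {X : Type*} [MeasurableSpace X] (μ : Measure X) [IsProbabilityMeasure μ]
    (a b : ℝ) (hab : a ≤ b)
    (f : X → ℝ) (hfm : Measurable f) (hf : ∀ x, f x ∈ Set.Icc a b)
    (φ : ℝ → ℝ) (hφ : ConvexOn ℝ (Set.Icc a b) φ) :
    Integrable f μ ∧ Integrable (φ ∘ f) μ ∧
      φ (a + b - ∫ x, f x ∂μ) ≤ φ a + φ b - ∫ x, φ (f x) ∂μ :=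
  jensen_mercer_integral_general μ a b f hfm hf φ hφ
end

section
/- Let μ be a probability measure on a measurable space X and let a ≤ b be real constants. If f : X → [a,b] is a measurable function and φ is a convex function on [a,b], then f and φ ∘ f are μ-integrable and the two-sided estimate φ(∫_X f dμ) ≤ ∫_X (φ ∘ f) dμ ≤ φ(a) + φ(b) − φ(a + b − ∫_X f dμ) holds. -/
open MeasureTheory Set

/-!
The lower bound is Jensen's inequality. Mathlib's `ConvexOn.map_integral_le` needs `φ` to be
continuous on `[a, b]`, which a convex function need not be at the endpoints, so we argue
directly: if the mean `m` lies in `(a, b)`, the line through `(m, φ m)` with slope the right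
derivative of `φ` at `m` supports `φ`, and integrating it gives `φ m ≤ ∫ φ ∘ f`; if `m` is an
endpoint, `f` is almost everywhere constant.

For the upper bound, `y` and `a + b - y` are convex combinations of `a` and `b` with swapped
weights, so `φ y + φ (a + b - y) ≤ φ a + φ b`. Integrating this along `f` and applying the lower
bound to `a + b - f` gives `∫ φ ∘ f ≤ φ a + φ b - φ (a + b - ∫ f)`.
-/

theorem ContinuousOn.measurable_domRestrict_of_countable_sdiff {α β : Type*} [TopologicalSpace α]
    [MeasurableSpace α] [OpensMeasurableSpace α] [MeasurableSingletonClass α]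
    [TopologicalSpace β] [MeasurableSpace β] [BorelSpace β] {f : α → β} {s t : Set α}
    (hf : ContinuousOn f t) (hst : (s \ t).Countable) : Measurable (s.domRestrict f) := by
  refine ContinuousOn.measurable_of_countable_compl (s := Subtype.val ⁻¹' t) ?_ ?_
  · exact hf.comp continuous_subtype_val.continuousOn fun _ hx => hx
  · convert hst.preimage Subtype.val_injective using 1
    ext x
    simp

section Convex

variable {S : Set ℝ} {φ : ℝ → ℝ} {a b m y : ℝ}

theorem ConvexOn.map_add_rightDeriv_mul_sub_le (hφ : ConvexOn ℝ S φ) (hm : m ∈ interior S)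
    (hy : y ∈ S) : φ m + derivWithin φ (Ioi m) m * (y - m) ≤ φ y := by
  rcases lt_trichotomy y m with hym | rfl | hmy
  · have h := (hφ.slope_le_leftDeriv_of_mem_interior hy hm hym).trans
      (hφ.leftDeriv_le_rightDeriv_of_mem_interior hm)
    rw [slope_def_field, div_le_iff₀ (sub_pos.2 hym)] at h
    linarith
  · simp
  · have h := hφ.rightDeriv_le_slope_of_mem_interior hm hy hmy
    rw [slope_def_field, le_div_iff₀ (sub_pos.2 hmy)] at h
    linarith

theorem ConvexOn.map_add_map_reflect_le (hφ : ConvexOn ℝ (Icc a b) φ) (hy : y ∈ Icc a b) :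
    φ y + φ (a + b - y) ≤ φ a + φ b := by
  have hab : a ≤ b := hy.1.trans hy.2
  have ha : a ∈ Icc a b := left_mem_Icc.2 hab
  have hb : b ∈ Icc a b := right_mem_Icc.2 hab
  rw [← segment_eq_Icc hab] at hy
  obtain ⟨s, t, hs, ht, hst, rfl⟩ := hy
  have hreflect : a + b - (s • a + t • b) = t • a + s • b := by
    simp only [smul_eq_mul]; linear_combination (-(a + b)) * hst
  rw [hreflect]
  have h₁ := hφ.2 ha hb hs ht hst
  have h₂ := hφ.2 ha hb ht hs ((add_comm t s).trans hst)
  simp only [smul_eq_mul] at h₁ h₂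
  linear_combination h₁ + h₂ + (φ a + φ b) * hst

theorem ConvexOn.map_mem_Icc_of_mem_Icc (hφ : ConvexOn ℝ (Icc a b) φ) (hy : y ∈ Icc a b) :
    φ y ∈ Icc (2 * φ ((a + b) / 2) - max (φ a) (φ b)) (max (φ a) (φ b)) := by
  have hab : a ≤ b := hy.1.trans hy.2
  have hbound : ∀ z ∈ Icc a b, φ z ≤ max (φ a) (φ b) := fun z hz =>
    hφ.le_on_segment (left_mem_Icc.2 hab) (right_mem_Icc.2 hab) (segment_eq_Icc hab ▸ hz)
  have hy' : a + b - y ∈ Icc a b := ⟨by linarith [hy.2], by linarith [hy.1]⟩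
  have hmid := hφ.2 hy hy' (by norm_num : (0 : ℝ) ≤ 1 / 2) (by norm_num : (0 : ℝ) ≤ 1 / 2)
    (by norm_num)
  rw [show (1 / 2 : ℝ) • y + (1 / 2 : ℝ) • (a + b - y) = (a + b) / 2 by
    simp only [smul_eq_mul]; ring] at hmid
  simp only [smul_eq_mul] at hmid
  exact ⟨by linarith [hbound _ hy'], hbound y hy⟩

end Convex

section Integral

variable {X : Type*} [MeasurableSpace X] {μ : Measure X} {f : X → ℝ} {φ : ℝ → ℝ} {a b : ℝ}

theorem ConvexOn.measurable_comp_of_mem_Icc (hφ : ConvexOn ℝ (Icc a b) φ) (hfm : Measurable f)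
    (hf : ∀ x, f x ∈ Icc a b) : Measurable fun x => φ (f x) := by
  have hcont : ContinuousOn φ (Ioo a b) := by
    simpa only [interior_Icc] using hφ.continuousOn_interior
  have hends : (Icc a b \ Ioo a b).Countable := by
    refine (toFinite {a, b}).countable.mono fun y hy => ?_
    simp only [mem_sdiff, mem_Icc, mem_Ioo, not_and_or, not_lt] at hy
    rcases hy with ⟨⟨h₁, h₂⟩, h | h⟩
    · exact Or.inl (le_antisymm h h₁)
    · exact Or.inr (le_antisymm h₂ h)
  exact (hcont.measurable_domRestrict_of_countable_sdiff hends).comp (hfm.subtype_mk (h := hf))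

theorem ConvexOn.integrable_comp_of_mem_Icc [IsFiniteMeasure μ] (hφ : ConvexOn ℝ (Icc a b) φ)
    (hfm : Measurable f) (hf : ∀ x, f x ∈ Icc a b) : Integrable (fun x => φ (f x)) μ :=
  .of_mem_Icc _ _ (hφ.measurable_comp_of_mem_Icc hfm hf).aemeasurable
    (ae_of_all _ fun x => hφ.map_mem_Icc_of_mem_Icc (hf x))

theorem ConvexOn.map_integral_le_of_mem_Icc [IsProbabilityMeasure μ]
    (hφ : ConvexOn ℝ (Icc a b) φ) (hf : ∀ᵐ x ∂μ, f x ∈ Icc a b) (hfi : Integrable f μ)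
    (hφfi : Integrable (fun x => φ (f x)) μ) : φ (∫ x, f x ∂μ) ≤ ∫ x, φ (f x) ∂μ := by
  have hmean : ∫ x, f x ∂μ ∈ Icc a b := (convex_Icc a b).integral_mem isClosed_Icc hf hfi
  have of_ae_const : ∀ c, f =ᵐ[μ] (fun _ => c) → φ (∫ x, f x ∂μ) ≤ ∫ x, φ (f x) ∂μ := by
    intro c hc
    rw [integral_congr_ae hc,
      integral_congr_ae (f := fun x => φ (f x)) (g := fun _ => φ c) (hc.fun_comp φ)]
    simp
  rcases eq_endpoints_or_mem_Ioo_of_mem_Icc hmean with ha | hb | hm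
  · exact of_ae_const a ((integral_eq_iff_of_ae_le (integrable_const a) hfi
      (hf.mono fun x hx => hx.1)).1 (by simp [ha])).symm
  · exact of_ae_const b ((integral_eq_iff_of_ae_le hfi (integrable_const b)
      (hf.mono fun x hx => hx.2)).1 (by simp [hb]))
  set m := ∫ x, f x ∂μ
  set c := derivWithin φ (Ioi m) m
  rw [← interior_Icc] at hm
  have hslope : Integrable (fun x => c * (f x - m)) μ :=
    (hfi.sub (integrable_const m)).const_mul c
  calc φ m = ∫ x, (φ m + c * (f x - m)) ∂μ := by
        rw [integral_add (integrable_const _) hslope, integral_const_mul,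
          integral_sub hfi (integrable_const m)]
        simp [m]
    _ ≤ ∫ x, φ (f x) ∂μ :=
        integral_mono_ae ((integrable_const _).add hslope) hφfi
          (hf.mono fun x hx => hφ.map_add_rightDeriv_mul_sub_le hm hx)

end Integral

theorem jensen_two_sided_integral_general
    {X : Type*} [MeasurableSpace X] (μ : Measure X) [IsProbabilityMeasure μ]
    (a b : ℝ)
    (f : X → ℝ) (hfm : Measurable f) (hf : ∀ x, f x ∈ Set.Icc a b)
    (φ : ℝ → ℝ) (hφ : ConvexOn ℝ (Set.Icc a b) φ) :
    Integrable f μ ∧ Integrable (φ ∘ f) μ ∧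
      φ (∫ x, f x ∂μ) ≤ ∫ x, φ (f x) ∂μ ∧
      ∫ x, φ (f x) ∂μ ≤ φ a + φ b - φ (a + b - ∫ x, f x ∂μ) := by
  have hfi : Integrable f μ := .of_mem_Icc a b hfm.aemeasurable (ae_of_all _ hf)
  have hφfi : Integrable (fun x => φ (f x)) μ := hφ.integrable_comp_of_mem_Icc hfm hf
  have hg : ∀ x, a + b - f x ∈ Icc a b := fun x => ⟨by linarith [(hf x).2], by linarith [(hf x).1]⟩
  have hgi : Integrable (fun x => a + b - f x) μ := (integrable_const _).sub hfi
  have hφgi : Integrable (fun x => φ (a + b - f x)) μ :=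
    hφ.integrable_comp_of_mem_Icc (hfm.const_sub _) hg
  have hreflect : ∫ x, φ (f x) ∂μ + ∫ x, φ (a + b - f x) ∂μ ≤ φ a + φ b := by
    rw [← integral_add hφfi hφgi]
    calc _ ≤ ∫ _, (φ a + φ b) ∂μ :=
          integral_mono (hφfi.add hφgi) (integrable_const _)
            fun x => hφ.map_add_map_reflect_le (hf x)
      _ = φ a + φ b := by simp
  have hjensen_reflect := hφ.map_integral_le_of_mem_Icc (ae_of_all _ hg) hgi hφgi
  rw [integral_sub (integrable_const _) hfi, integral_const, probReal_univ, one_smul]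
    at hjensen_reflect
  exact ⟨hfi, hφfi, hφ.map_integral_le_of_mem_Icc (ae_of_all _ hf) hfi hφfi, by linarith⟩

/-- Two-sided Jensen estimate: if `μ` is a probability measure on `X`, `a ≤ b`,
`f : X → [a,b]` is measurable, and `φ` is convex on `[a,b]`, then `f` and `φ ∘ f` are
`μ`-integrable and
`φ(∫ f dμ) ≤ ∫ φ ∘ f dμ ≤ φ(a) + φ(b) − φ(a + b − ∫ f dμ)`. -/
theorem jensen_two_sided_integral
    {X : Type*} [MeasurableSpace X] (μ : Measure X) [IsProbabilityMeasure μ]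
    (a b : ℝ) (hab : a ≤ b)
    (f : X → ℝ) (hfm : Measurable f) (hf : ∀ x, f x ∈ Set.Icc a b)
    (φ : ℝ → ℝ) (hφ : ConvexOn ℝ (Set.Icc a b) φ) :
    Integrable f μ ∧ Integrable (φ ∘ f) μ ∧
      φ (∫ x, f x ∂μ) ≤ ∫ x, φ (f x) ∂μ ∧
      ∫ x, φ (f x) ∂μ ≤ φ a + φ b - φ (a + b - ∫ x, f x ∂μ) :=
  jensen_two_sided_integral_general μ a b f hfm hf φ hφ
end
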